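/- There is no finite graph H such that the class of finite undirected graphs homomorphically mapping to H equals the class of triangle-free finite graphs. More precisely: for every n, there exists a triangle-free finite graph G such that every graph H with fewer than n vertices admitting a homomorphism from G contains a triangle or a loop. -/
import Mathlib

private def NFT.E (n : ℕ) : (Fin n ⊕ (Fin n × Fin n × Bool)) → (Fin n ⊕ (Fin n × Fin n × Bool)) → Prop
  | .inl i, .inr (i', j, false) => i = i' ∧ i' ≠ j
  | .inr (i, j, false), .inl i' => i = i' ∧ i ≠ j
  | .inr (i, j, true), .inl j' => j = j' ∧ i ≠ j
  | .inl j', .inr (i, j, true) => j = j' ∧ i ≠ j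
  | .inr (i, j, false), .inr (i', j', true) => i = i' ∧ j = j' ∧ i ≠ j
  | .inr (i, j, true), .inr (i', j', false) => i = i' ∧ j = j' ∧ i ≠ j
  | _, _ => False

/-- No finite graph is a template for triangle-freeness: for every `n` there is a
triangle-free finite graph `G` such that every graph `H` on fewer than `n` vertices
admitting a homomorphism from `G` contains a loop or a triangle. -/
theorem no_finite_template_for_triangle_freeness (n : ℕ) :
    ∃ (V : Type) (_ : Fintype V) (E : V → V → Prop),
      Symmetric E ∧
      (¬ ∃ a b c : V, a ≠ b ∧ b ≠ c ∧ a ≠ c ∧ E a b ∧ E b c ∧ E a c) ∧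
      ∀ (W : Type) (_ : Fintype W) (F : W → W → Prop), Symmetric F →
        Fintype.card W < n →
        (∃ h : V → W, ∀ u v, E u v → F (h u) (h v)) →
        (∃ w : W, F w w) ∨
          (∃ a b c : W, a ≠ b ∧ b ≠ c ∧ a ≠ c ∧ F a b ∧ F b c ∧ F a c) := by
  refine ⟨Fin n ⊕ (Fin n × Fin n × Bool), inferInstance, NFT.E n, ?_, ?_, ?_⟩
  · rintro (i | ⟨i, j, (_|_)⟩) (i' | ⟨i', j', (_|_)⟩) h <;>
      simp_all [NFT.E] <;> aesop
  · rintro ⟨a, b, c, hab, hbc, hac, e1, e2, e3⟩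
    rcases a with i | ⟨i, j, (_|_)⟩ <;> rcases b with i' | ⟨i', j', (_|_)⟩ <;>
      rcases c with i'' | ⟨i'', j'', (_|_)⟩ <;>
      simp_all [NFT.E]
  · intro W _ F hFsymm hcard ⟨h, hh⟩
    have : Fintype.card W < Fintype.card (Fin n) := by simpa using hcard
    obtain ⟨i, j, hij, hw⟩ := Fintype.exists_ne_map_eq_of_card_lt (fun i : Fin n => h (.inl i)) this
    set w := h (.inl i)
    set a := h (.inr (i, j, false))
    set b := h (.inr (i, j, true))
    have f1 : F w a := hh _ _ (by exact ⟨rfl, hij⟩)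
    have f2 : F a b := hh _ _ (by exact ⟨rfl, rfl, hij⟩)
    have f3 : F b w := by
      have : F b (h (.inl j)) := hh _ _ (by exact ⟨rfl, hij⟩)
      rwa [← hw] at this
    by_cases h1 : w = a
    · exact .inl ⟨a, h1 ▸ f1⟩
    by_cases h2 : a = b
    · exact .inl ⟨a, h2 ▸ f2⟩
    by_cases h3 : b = w
    · exact .inl ⟨b, h3 ▸ f3⟩
    · exact .inr ⟨w, a, b, h1, h2, fun e => h3 e.symm, f1, f2, hFsymm f3⟩
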